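/- arXiv:2506.06663 — 4 statements merged into one kernel-verified Lean document; each statement's English description precedes it below -/
import Mathlib

section
/- For every positive integer m, ∑_{k=1}^{m} ψ₀(k)/(m+1-k) = ψ₀²(m+1) - ψ₀(1)·ψ₀(m+1) + ψ₁(m+1) - ψ₁(1). -/
open Finset

/-- Digamma function at a positive integer argument: `ψ₀ l = -γ + ∑_{i=1}^{l-1} 1/i`. -/
noncomputable def ψ₀ (l : ℕ) : ℝ :=
  -Real.eulerMascheroniConstant + ∑ i ∈ Finset.range (l - 1), (1 : ℝ) / (i + 1)

/-- Trigamma function at a positive integer argument: `ψ₁ l = π²/6 - ∑_{i=1}^{l-1} 1/i²`. -/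
noncomputable def ψ₁ (l : ℕ) : ℝ :=
  Real.pi ^ 2 / 6 - ∑ i ∈ Finset.range (l - 1), (1 : ℝ) / (i + 1) ^ 2

/-- Tetragamma function at a positive integer argument:
`ψ₂ l = -2ζ(3) + 2∑_{i=1}^{l-1} 1/i³`, where `ζ(3) = ∑_{i=1}^∞ 1/i³`. -/
noncomputable def ψ₂ (l : ℕ) : ℝ :=
  -2 * (∑' i : ℕ, (1 : ℝ) / (i + 1) ^ 3) +
    2 * ∑ i ∈ Finset.range (l - 1), (1 : ℝ) / (i + 1) ^ 3

/-!
Write `H n` for the harmonic number and `H⁽²⁾ n = ∑_{i ≤ n} 1/i²`, so that `ψ₀ (k + 1) = -γ + H k`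
and `ψ₁ (k + 1) = π²/6 - H⁽²⁾ k`. After reindexing by `i = k - 1`, `j = m - k`, the `γ`-terms match
and the identity reduces to the convolution `∑_{i+j=n} H i / (j+1) = H (n+1)² - H⁽²⁾ (n+1)`.
Passing from `n` to `n + 1` adds `∑_{i+j=n} 1/((i+1)(j+1))`, which the partial fractions
`1/((i+1)(j+1)) = (1/(i+1) + 1/(j+1))/(n+2)` evaluate to `2 H (n+1) / (n+2)`: exactly the
increment of `H² - H⁽²⁾`.
-/

def harmonic₂ (n : ℕ) : ℚ := ∑ i ∈ range n, ((i + 1 : ℚ) ^ 2)⁻¹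

@[simp]
theorem harmonic₂_zero : harmonic₂ 0 = 0 :=
  rfl

theorem harmonic₂_succ (n : ℕ) : harmonic₂ (n + 1) = harmonic₂ n + ((n + 1 : ℚ) ^ 2)⁻¹ :=
  sum_range_succ ..

namespace Finset.Nat

theorem sum_antidiagonal_fst {M : Type*} [AddCommMonoid M] (f : ℕ → M) (n : ℕ) :
    ∑ p ∈ antidiagonal n, f p.1 = ∑ k ∈ range (n + 1), f k :=
  sum_antidiagonal_eq_sum_range_succ (fun i _ => f i) n

theorem sum_antidiagonal_snd {M : Type*} [AddCommMonoid M] (f : ℕ → M) (n : ℕ) :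
    ∑ p ∈ antidiagonal n, f p.2 = ∑ k ∈ range (n + 1), f k := by
  rw [← sum_antidiagonal_swap]
  exact sum_antidiagonal_fst f n

theorem sum_Icc_eq_sum_antidiagonal {M : Type*} [AddCommMonoid M] (f : ℕ → ℕ → M) (n : ℕ) :
    ∑ k ∈ Icc 1 (n + 1), f k (n + 1 + 1 - k) = ∑ p ∈ antidiagonal n, f (p.1 + 1) (p.2 + 1) := by
  rw [sum_antidiagonal_eq_sum_range_succ (fun i j => f (i + 1) (j + 1))]
  refine sum_nbij' (· - 1) (· + 1) ?_ ?_ ?_ ?_ ?_ <;> intro k hk <;>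
    simp only [mem_Icc, mem_range] at hk ⊢
  · omega
  · omega
  · omega
  · omega
  · congr 1 <;> omega

end Finset.Nat

open Finset.Nat

theorem harmonic_succ_eq_sum_antidiagonal (n : ℕ) :
    harmonic (n + 1) = ∑ p ∈ antidiagonal n, ((p.2 + 1 : ℕ) : ℚ)⁻¹ :=
  (sum_antidiagonal_snd (fun j => ((j + 1 : ℕ) : ℚ)⁻¹) n).symm

theorem sum_antidiagonal_inv_mul_inv (n : ℕ) :
    ∑ p ∈ antidiagonal n, ((p.1 + 1 : ℚ) * (p.2 + 1))⁻¹ = 2 * harmonic (n + 1) / (n + 2) := by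
  have partial_fractions : ∀ p ∈ antidiagonal n, ((p.1 + 1 : ℚ) * (p.2 + 1))⁻¹
      = (((p.1 + 1 : ℕ) : ℚ)⁻¹ + ((p.2 + 1 : ℕ) : ℚ)⁻¹) / (n + 2) := by
    intro p hp
    have hsum : (p.1 : ℚ) + p.2 = n := by exact_mod_cast mem_antidiagonal.mp hp
    push_cast
    field_simp
    linear_combination -hsum
  rw [sum_congr rfl partial_fractions, ← sum_div, sum_add_distrib,
    sum_antidiagonal_fst (fun i => ((i + 1 : ℕ) : ℚ)⁻¹), ← harmonic_succ_eq_sum_antidiagonal,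
    harmonic]
  ring

theorem sum_antidiagonal_harmonic_div (n : ℕ) :
    ∑ p ∈ antidiagonal n, harmonic p.1 / (p.2 + 1) = harmonic (n + 1) ^ 2 - harmonic₂ (n + 1) := by
  induction n with
  | zero => simp [harmonic₂_succ]
  | succ n ih =>
    have step : ∀ p : ℕ × ℕ, harmonic (p.1 + 1) / (p.2 + 1)
        = harmonic p.1 / (p.2 + 1) + ((p.1 + 1 : ℚ) * (p.2 + 1))⁻¹ := by
      intro p
      rw [harmonic_succ, add_div, mul_inv, div_eq_mul_inv]
      push_cast
      ring
    rw [sum_antidiagonal_succ, harmonic_zero, zero_div, zero_add]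
    simp only [step, sum_add_distrib, ih, sum_antidiagonal_inv_mul_inv]
    rw [harmonic_succ (n + 1), harmonic₂_succ (n + 1)]
    push_cast
    field_simp
    ring

theorem ψ₀_succ (l : ℕ) : ψ₀ (l + 1) = -Real.eulerMascheroniConstant + harmonic l := by
  simp [ψ₀, harmonic]

theorem ψ₁_succ (l : ℕ) : ψ₁ (l + 1) = Real.pi ^ 2 / 6 - harmonic₂ l := by
  simp [ψ₁, harmonic₂]

theorem stmt0_general (m : ℕ) :
    ∑ k ∈ Finset.Icc 1 m, ψ₀ k / ((m + 1 - k : ℕ) : ℝ) =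
      ψ₀ (m + 1) ^ 2 - ψ₀ 1 * ψ₀ (m + 1) + ψ₁ (m + 1) - ψ₁ 1 := by
  rcases m with _ | n
  · simp [sq]
  have split : ∀ p : ℕ × ℕ, ψ₀ (p.1 + 1) / ((p.2 + 1 : ℕ) : ℝ)
      = -Real.eulerMascheroniConstant * ↑((p.2 + 1 : ℕ) : ℚ)⁻¹ + ↑(harmonic p.1 / (p.2 + 1)) := by
    intro p
    rw [ψ₀_succ]
    push_cast
    ring
  rw [sum_Icc_eq_sum_antidiagonal (fun k j => ψ₀ k / (j : ℝ)), sum_congr rfl fun p _ => split p,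
    sum_add_distrib, ← mul_sum, ← Rat.cast_sum, ← Rat.cast_sum,
    ← harmonic_succ_eq_sum_antidiagonal, sum_antidiagonal_harmonic_div]
  simp only [ψ₀_succ, ψ₁_succ, harmonic_zero, harmonic₂_zero, Rat.cast_zero, Rat.cast_sub,
    Rat.cast_pow]
  ring

theorem stmt0 (m : ℕ) (hm : 0 < m) :
    ∑ k ∈ Finset.Icc 1 m, ψ₀ k / ((m + 1 - k : ℕ) : ℝ) =
      ψ₀ (m + 1) ^ 2 - ψ₀ 1 * ψ₀ (m + 1) + ψ₁ (m + 1) - ψ₁ 1 :=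
  stmt0_general m
end

section
/- Let m be a positive integer and a an integer with a > m. Then ∑_{k=1}^{m} ψ₀(k)/(a+1-k) = -∑_{k=1}^{m} ψ₀(k+a-m)/k + (1/2)·( (ψ₀(a+1) - ψ₀(a-m))² + 2ψ₀(m+1)·(-ψ₀(a-m+1) + ψ₀(a-m) + ψ₀(a+1)) - 2ψ₀(1)·ψ₀(a-m) - ψ₁(a-m) + ψ₁(a+1) ). -/
open Finset

/-!
Write `a = m + c`. With `a` fixed, passing from
`(m, c + 1)` to `(m + 1, c)` changes the left side by two boundary terms and the telescoping
sum `∑ 1 / (k (k + c))`, computed by partial fractions; the closed form changes by the same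
amount, using only `ψ₀ (l + 1) = ψ₀ l + 1 / l` and `ψ₁ (l + 1) = ψ₁ l - 1 / l²`. At `m = 0`
both sides vanish, so induction on `m` (generalising `c`) proves the identity.
-/

-- At `l = 0` both sides are `-γ`, since `1 / 0 = 0`.
lemma psi0_succ (l : ℕ) : ψ₀ (l + 1) = ψ₀ l + 1 / (l : ℝ) := by
  cases l with
  | zero => simp [ψ₀]
  | succ n => simp only [ψ₀, Nat.add_sub_cancel, Finset.sum_range_succ]; push_cast; ring

lemma psi1_succ (l : ℕ) : ψ₁ (l + 1) = ψ₁ l - 1 / (l : ℝ) ^ 2 := by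
  cases l with
  | zero => simp [ψ₁]
  | succ n => simp only [ψ₁, Nat.add_sub_cancel, Finset.sum_range_succ]; push_cast; ring

lemma sum_Icc_one_div_add (m c : ℕ) :
    ∑ k ∈ Icc 1 m, (1 : ℝ) / (k + c) = ψ₀ (m + c + 1) - ψ₀ (c + 1) := by
  induction m with
  | zero => simp
  | succ n ih =>
    rw [sum_Icc_succ_top (by omega), ih, show n + 1 + c + 1 = n + c + 1 + 1 by omega,
      psi0_succ (n + c + 1)]
    push_cast
    ring

lemma sum_Icc_one_div_mul_add (m : ℕ) {c : ℕ} (hc : c ≠ 0) :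
    ∑ k ∈ Icc 1 m, (1 : ℝ) / (k * (k + c)) =
      (ψ₀ (m + 1) - ψ₀ 1 - (ψ₀ (m + c + 1) - ψ₀ (c + 1))) / c := by
  have partial_fractions : ∀ k ∈ Icc 1 m,
      (1 : ℝ) / (k * (k + c)) = (1 / (k : ℝ) - 1 / (k + c)) / c := by
    intro k hk
    have hk : (k : ℝ) ≠ 0 := Nat.cast_ne_zero.mpr (by grind)
    have hc' : (c : ℝ) ≠ 0 := Nat.cast_ne_zero.mpr hc
    field_simp
    ring
  have harmonic_eq : ∑ k ∈ Icc 1 m, (1 : ℝ) / k = ψ₀ (m + 1) - ψ₀ 1 := by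
    simpa using sum_Icc_one_div_add m 0
  rw [sum_congr rfl partial_fractions, ← sum_div, sum_sub_distrib, harmonic_eq,
    sum_Icc_one_div_add]

lemma psi0_div_eq (n k : ℕ) :
    ψ₀ n / (k : ℝ) = ψ₀ (n + 1) / k - 1 / (k * n) := by
  rw [psi0_succ]
  ring

/-- The two sums of the theorem for `a = m + c`, the second one moved to the left. -/
noncomputable def psi0Sum (m c : ℕ) : ℝ :=
  ∑ k ∈ Icc 1 m, ψ₀ k / ((m + c + 1 - k : ℕ) : ℝ) + ∑ k ∈ Icc 1 m, ψ₀ (k + c) / (k : ℝ)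

noncomputable def psi0SumClosed (m c : ℕ) : ℝ :=
  (1 / 2) * ((ψ₀ (m + c + 1) - ψ₀ c) ^ 2 +
    2 * ψ₀ (m + 1) * (-ψ₀ (c + 1) + ψ₀ c + ψ₀ (m + c + 1)) -
    2 * ψ₀ 1 * ψ₀ c - ψ₁ c + ψ₁ (m + c + 1))

lemma psi0Sum_zero (c : ℕ) : psi0Sum 0 c = 0 := by
  simp [psi0Sum]

lemma psi0SumClosed_zero (c : ℕ) : psi0SumClosed 0 c = 0 := by
  simp only [psi0SumClosed, zero_add, psi0_succ c, psi1_succ c]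
  ring

lemma psi0Sum_succ (m c : ℕ) :
    psi0Sum (m + 1) c = psi0Sum m (c + 1) + ψ₀ (m + 1) / (c + 1) + ψ₀ (m + c + 1) / (m + 1) -
      ∑ k ∈ Icc 1 m, (1 : ℝ) / (k * (k + c)) := by
  have shift : ∑ k ∈ Icc 1 m, ψ₀ (k + c) / (k : ℝ) =
      ∑ k ∈ Icc 1 m, ψ₀ (k + (c + 1)) / (k : ℝ) - ∑ k ∈ Icc 1 m, (1 : ℝ) / (k * (k + c)) := by
    rw [← sum_sub_distrib]
    refine sum_congr rfl fun k _ => ?_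
    rw [psi0_div_eq (k + c) k, add_assoc, Nat.cast_add]
  rw [psi0Sum, psi0Sum, sum_Icc_succ_top (by omega), sum_Icc_succ_top (by omega), shift,
    show m + 1 + c + 1 = m + (c + 1) + 1 by omega, show m + (c + 1) + 1 - (m + 1) = c + 1 by omega,
    show m + 1 + c = m + c + 1 by omega]
  push_cast
  ring

lemma psi0SumClosed_succ (m : ℕ) {c : ℕ} (hc : c ≠ 0) :
    psi0SumClosed (m + 1) c = psi0SumClosed m (c + 1) + ψ₀ (m + 1) / (c + 1) +
      ψ₀ (m + c + 1) / (m + 1) - (ψ₀ (m + 1) - ψ₀ 1 - (ψ₀ (m + c + 1) - ψ₀ (c + 1))) / c := by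
  simp only [psi0SumClosed, show m + 1 + c + 1 = m + c + 1 + 1 by omega,
    show m + (c + 1) + 1 = m + c + 1 + 1 by omega, psi0_succ (m + c + 1), psi0_succ (m + 1),
    psi0_succ (c + 1), psi0_succ c, psi1_succ c]
  have hc' : (c : ℝ) ≠ 0 := Nat.cast_ne_zero.mpr hc
  have hm : (m : ℝ) + 1 ≠ 0 := by positivity
  have hmc : (m : ℝ) + c + 1 ≠ 0 := by positivity
  push_cast
  field_simp
  ring

theorem psi0Sum_eq_closed (m : ℕ) {c : ℕ} (hc : c ≠ 0) : psi0Sum m c = psi0SumClosed m c := by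
  induction m generalizing c with
  | zero => rw [psi0Sum_zero, psi0SumClosed_zero]
  | succ m ih =>
    rw [psi0Sum_succ, ih c.succ_ne_zero, sum_Icc_one_div_mul_add m hc, psi0SumClosed_succ m hc]

theorem stmt3_general (m a : ℕ) (ha : m < a) :
    ∑ k ∈ Finset.Icc 1 m, ψ₀ k / ((a + 1 - k : ℕ) : ℝ) =
      -∑ k ∈ Finset.Icc 1 m, ψ₀ (k + a - m) / (k : ℝ) +
        (1 / 2) * ((ψ₀ (a + 1) - ψ₀ (a - m)) ^ 2 +
          2 * ψ₀ (m + 1) * (-ψ₀ (a - m + 1) + ψ₀ (a - m) + ψ₀ (a + 1)) -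
          2 * ψ₀ 1 * ψ₀ (a - m) - ψ₁ (a - m) + ψ₁ (a + 1)) := by
  obtain ⟨c, hc, rfl⟩ : ∃ c, c ≠ 0 ∧ a = m + c := ⟨a - m, by omega, by omega⟩
  have h := psi0Sum_eq_closed m hc
  simp only [psi0Sum, psi0SumClosed] at h
  simp only [Nat.add_sub_cancel_left, show ∀ k, k + (m + c) - m = k + c by omega]
  linarith

theorem stmt3 (m a : ℕ) (hm : 0 < m) (ha : m < a) :
    ∑ k ∈ Finset.Icc 1 m, ψ₀ k / ((a + 1 - k : ℕ) : ℝ) =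
      -∑ k ∈ Finset.Icc 1 m, ψ₀ (k + a - m) / (k : ℝ) +
        (1 / 2) * ((ψ₀ (a + 1) - ψ₀ (a - m)) ^ 2 +
          2 * ψ₀ (m + 1) * (-ψ₀ (a - m + 1) + ψ₀ (a - m) + ψ₀ (a + 1)) -
          2 * ψ₀ 1 * ψ₀ (a - m) - ψ₁ (a - m) + ψ₁ (a + 1)) :=
  stmt3_general m a ha
end

section
/- Let m be a positive integer and a an integer with a > m. Then ∑_{k=1}^{m} ψ₁(k)/(a+1-k) = ∑_{k=1}^{m} ( -ψ₁(k+a-m)/k + ψ₁(k)/(k+a-m) - ψ₁(k+a-m)/(k+a-m) ) - ψ₁(m+1)·ψ₀(a-m+1) + (1/(a-m)²)·(ψ₀(a-m+1) - ψ₀(a+1) + ψ₀(m+1) - ψ₀(1)) + (1/(a-m))·(ψ₁(a+1) - ψ₁(a-m+1)) + (1/2)·( -2ψ₁(a+1)·(ψ₀(a-m+1) - ψ₀(m+1) + ψ₀(1)) + 2ψ₁(m+1)·ψ₀(a-m+1) - ψ₂(a-m+1) + ψ₂(a+1) ) + ψ₀(a+1)·(ψ₁(a+1) - ψ₁(1))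 + ψ₁(1)·ψ₀(a+1). -/
open Finset

/-! Put `a = m + d` and write `ψ₀ (l + 1) = -γ + H_l`, `ψ₁ (l + 1) = π²/6 - H_l⁽²⁾`,
`ψ₂ (l + 1) = -2ζ(3) + 2H_l⁽³⁾` with generalized harmonic numbers `H_l⁽ˢ⁾ = ∑_{i ≤ l} 1/iˢ`.
The constants `γ`, `π²/6`, `ζ(3)` then cancel, and the left-hand side contributes the convolution
`∑_{k<m} H⁽²⁾_{m-1-k} / (k+1+d)`. For fixed `d` the identity follows by induction on `m`: the
step adds `∑_{k<m} 1/((m-k)² (k+1+d))` to the convolution, which partial fractions evaluate in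
terms of harmonic numbers. -/

noncomputable def genHarmonic (s n : ℕ) : ℝ := ∑ i ∈ range n, 1 / ((i : ℝ) + 1) ^ s

@[simp]
lemma genHarmonic_zero_right (s : ℕ) : genHarmonic s 0 = 0 := by simp [genHarmonic]

lemma genHarmonic_succ (s n : ℕ) :
    genHarmonic s (n + 1) = genHarmonic s n + 1 / ((n : ℝ) + 1) ^ s := by
  simp [genHarmonic, sum_range_succ]

lemma ψ₀_eq (l : ℕ) : ψ₀ l = -Real.eulerMascheroniConstant + genHarmonic 1 (l - 1) := by
  simp [ψ₀, genHarmonic]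

lemma ψ₁_eq (l : ℕ) : ψ₁ l = Real.pi ^ 2 / 6 - genHarmonic 2 (l - 1) := rfl

lemma ψ₂_eq (l : ℕ) :
    ψ₂ l = -2 * (∑' i : ℕ, (1 : ℝ) / (i + 1) ^ 3) + 2 * genHarmonic 3 (l - 1) := rfl

lemma sum_range_inv_add (d m : ℕ) :
    ∑ k ∈ range m, 1 / ((k : ℝ) + 1 + d) = genHarmonic 1 (m + d) - genHarmonic 1 d := by
  induction m with
  | zero => simp
  | succ n ih =>
    rw [sum_range_succ, ih, Nat.add_right_comm, genHarmonic_succ]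
    push_cast
    ring

lemma sum_range_inv_pow_sub (s m : ℕ) :
    ∑ k ∈ range m, 1 / ((m - k : ℕ) : ℝ) ^ s = genHarmonic s m := by
  rw [genHarmonic, ← sum_range_reflect]
  refine sum_congr rfl fun k hk => ?_
  rw [mem_range] at hk
  rw [show m - (m - 1 - k) = k + 1 by omega]
  push_cast
  rfl

/-- Partial fractions: `1/(x² y) = 1/(x² (x+y)) + 1/(x (x+y)²) + 1/(y (x+y)²)`, with
`x = m - k`, `y = k + 1 + d` and `x + y = m + 1 + d`. -/
lemma sum_range_inv_sq_mul (d m : ℕ) :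
    ∑ k ∈ range m, 1 / (((m - k : ℕ) : ℝ) ^ 2 * ((k : ℝ) + 1 + d)) =
      genHarmonic 2 m / ((m : ℝ) + 1 + d) +
        (genHarmonic 1 m + genHarmonic 1 (m + d) - genHarmonic 1 d) / ((m : ℝ) + 1 + d) ^ 2 := by
  have hpf : ∀ k ∈ range m, 1 / (((m - k : ℕ) : ℝ) ^ 2 * ((k : ℝ) + 1 + d)) =
      1 / ((m - k : ℕ) : ℝ) ^ 2 / ((m : ℝ) + 1 + d) +
        (1 / ((m - k : ℕ) : ℝ) ^ 1 + 1 / ((k : ℝ) + 1 + d)) / ((m : ℝ) + 1 + d) ^ 2 := by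
    intro k hk
    have hkm : (k : ℝ) < m := by exact_mod_cast mem_range.mp hk
    have hx : (m : ℝ) - k ≠ 0 := by linarith
    rw [Nat.cast_sub (mem_range.mp hk).le]
    field_simp
    ring
  rw [sum_congr rfl hpf, sum_add_distrib, ← sum_div, ← sum_div, sum_add_distrib,
    sum_range_inv_pow_sub, sum_range_inv_pow_sub, sum_range_inv_add]
  ring

noncomputable def harmonicConv (d m : ℕ) : ℝ :=
  ∑ k ∈ range m, genHarmonic 2 (m - 1 - k) / ((k : ℝ) + 1 + d)

lemma harmonicConv_succ (d m : ℕ) :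
    harmonicConv d (m + 1) =
      harmonicConv d m + ∑ k ∈ range m, 1 / (((m - k : ℕ) : ℝ) ^ 2 * ((k : ℝ) + 1 + d)) := by
  rw [harmonicConv, sum_range_succ, Nat.add_sub_cancel, Nat.sub_self, genHarmonic_zero_right,
    zero_div, add_zero, harmonicConv, ← sum_add_distrib]
  refine sum_congr rfl fun k hk => ?_
  have hk := mem_range.mp hk
  rw [show m - k = m - 1 - k + 1 by omega, genHarmonic_succ, add_div, div_div]
  push_cast
  ring

lemma harmonicConv_add_sum_eq (d m : ℕ) (hd : d ≠ 0) :
    harmonicConv d m + ∑ k ∈ range m, (genHarmonic 2 (k + d) / ((k : ℝ) + 1) -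
        genHarmonic 2 k / ((k : ℝ) + 1 + d) + genHarmonic 2 (k + d) / ((k : ℝ) + 1 + d)) =
      genHarmonic 2 (m + d) * (genHarmonic 1 (m + d) - genHarmonic 1 d + genHarmonic 1 m) -
        genHarmonic 3 (m + d) + genHarmonic 3 d -
        (genHarmonic 1 d - genHarmonic 1 (m + d) + genHarmonic 1 m) / (d : ℝ) ^ 2 -
        (genHarmonic 2 d - genHarmonic 2 (m + d)) / d := by
  induction m with
  | zero => simp [harmonicConv]
  | succ n ih =>
    rw [harmonicConv_succ, sum_range_succ, sum_range_inv_sq_mul, add_add_add_comm, ih,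
      Nat.add_right_comm, genHarmonic_succ 1 (n + d), genHarmonic_succ 1 n,
      genHarmonic_succ 2 (n + d), genHarmonic_succ 3 (n + d)]
    have hd0 : (d : ℝ) ≠ 0 := Nat.cast_ne_zero.mpr hd
    push_cast
    field_simp
    ring

lemma sum_Icc_one_eq_sum_range {M : Type*} [AddCommMonoid M] (f : ℕ → M) (m : ℕ) :
    ∑ k ∈ Icc 1 m, f k = ∑ k ∈ range m, f (k + 1) := by
  rw [← Ico_add_one_right_eq_Icc, sum_Ico_eq_sum_range, Nat.add_sub_cancel]
  simp only [add_comm 1]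

lemma sum_Icc_ψ₁_div (d m : ℕ) :
    ∑ k ∈ Icc 1 m, ψ₁ k / ((m + d + 1 - k : ℕ) : ℝ) =
      Real.pi ^ 2 / 6 * (genHarmonic 1 (m + d) - genHarmonic 1 d) - harmonicConv d m := by
  rw [sum_Icc_one_eq_sum_range, ← sum_range_reflect, ← sum_range_inv_add, mul_sum, harmonicConv,
    ← sum_sub_distrib]
  refine sum_congr rfl fun k hk => ?_
  have hk := mem_range.mp hk
  rw [ψ₁_eq, show m - 1 - k + 1 - 1 = m - 1 - k by omega,
    show m + d + 1 - (m - 1 - k + 1) = k + 1 + d by omega]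
  push_cast
  ring

lemma sum_Icc_ψ₁_shift (d m : ℕ) :
    ∑ k ∈ Icc 1 m, (-(ψ₁ (k + d) / (k : ℝ)) + ψ₁ k / ((k + d : ℕ) : ℝ) -
        ψ₁ (k + d) / ((k + d : ℕ) : ℝ)) =
      -(Real.pi ^ 2 / 6 * genHarmonic 1 m) + ∑ k ∈ range m, (genHarmonic 2 (k + d) / ((k : ℝ) + 1) -
        genHarmonic 2 k / ((k : ℝ) + 1 + d) + genHarmonic 2 (k + d) / ((k : ℝ) + 1 + d)) := by
  rw [sum_Icc_one_eq_sum_range, genHarmonic, mul_sum, ← sum_neg_distrib, ← sum_add_distrib]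
  refine sum_congr rfl fun k _ => ?_
  rw [ψ₁_eq, ψ₁_eq, Nat.add_sub_cancel, Nat.add_right_comm, Nat.add_sub_cancel]
  push_cast
  ring

theorem stmt8_general (m a : ℕ) (ha : m < a) :
    ∑ k ∈ Finset.Icc 1 m, ψ₁ k / ((a + 1 - k : ℕ) : ℝ) =
      ∑ k ∈ Finset.Icc 1 m, (-(ψ₁ (k + a - m) / (k : ℝ)) +
          ψ₁ k / ((k + a - m : ℕ) : ℝ) - ψ₁ (k + a - m) / ((k + a - m : ℕ) : ℝ)) -
        ψ₁ (m + 1) * ψ₀ (a - m + 1) +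
        (1 / ((a : ℝ) - m) ^ 2) *
          (ψ₀ (a - m + 1) - ψ₀ (a + 1) + ψ₀ (m + 1) - ψ₀ 1) +
        (1 / ((a : ℝ) - m)) * (ψ₁ (a + 1) - ψ₁ (a - m + 1)) +
        (1 / 2) * (-2 * ψ₁ (a + 1) * (ψ₀ (a - m + 1) - ψ₀ (m + 1) + ψ₀ 1) +
          2 * ψ₁ (m + 1) * ψ₀ (a - m + 1) - ψ₂ (a - m + 1) + ψ₂ (a + 1)) +
        ψ₀ (a + 1) * (ψ₁ (a + 1) - ψ₁ 1) + ψ₁ 1 * ψ₀ (a + 1) := by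
  obtain ⟨d, hd, rfl⟩ : ∃ d, d ≠ 0 ∧ a = m + d := ⟨a - m, by omega, by omega⟩
  have hshift : ∀ k, k + (m + d) - m = k + d := fun k => by omega
  simp only [hshift, Nat.add_sub_cancel_left, sum_Icc_ψ₁_div, sum_Icc_ψ₁_shift]
  simp only [ψ₀_eq, ψ₁_eq, ψ₂_eq, Nat.add_sub_cancel, Nat.sub_self, genHarmonic_zero_right]
  push_cast
  linear_combination -harmonicConv_add_sum_eq d m hd

theorem stmt8 (m a : ℕ) (hm : 0 < m) (ha : m < a) :
    ∑ k ∈ Finset.Icc 1 m, ψ₁ k / ((a + 1 - k : ℕ) : ℝ) =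
      ∑ k ∈ Finset.Icc 1 m, (-(ψ₁ (k + a - m) / (k : ℝ)) +
          ψ₁ k / ((k + a - m : ℕ) : ℝ) - ψ₁ (k + a - m) / ((k + a - m : ℕ) : ℝ)) -
        ψ₁ (m + 1) * ψ₀ (a - m + 1) +
        (1 / ((a : ℝ) - m) ^ 2) *
          (ψ₀ (a - m + 1) - ψ₀ (a + 1) + ψ₀ (m + 1) - ψ₀ 1) +
        (1 / ((a : ℝ) - m)) * (ψ₁ (a + 1) - ψ₁ (a - m + 1)) +
        (1 / 2) * (-2 * ψ₁ (a + 1) * (ψ₀ (a - m + 1) - ψ₀ (m + 1) + ψ₀ 1) +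
          2 * ψ₁ (m + 1) * ψ₀ (a - m + 1) - ψ₂ (a - m + 1) + ψ₂ (a + 1)) +
        ψ₀ (a + 1) * (ψ₁ (a + 1) - ψ₁ 1) + ψ₁ 1 * ψ₀ (a + 1) :=
  stmt8_general m a ha
end

section
/- Let m and b be positive integers. Then ∑_{k=1}^{m} ψ₀(k)·ψ₀(k+b)/k = -(1/2)·∑_{k=1}^{m} ( ψ₁(k)/(k+b) + ψ₀²(k)/(k+b) ) - (1/b)·∑_{k=1}^{m} ψ₀(k+b)/k + (1/b²)·(ψ₀(b+m+1) - ψ₀(b+1) - ψ₀(m+1) + ψ₀(1)) + (1/(2b))·( 2ψ₀(m+1)·ψ₀(b+m+1) - 2ψ₀(1)·ψ₀(b+1) - ψ₀²(m+1) - ψ₁(m+1) + ψ₀²(1) + ψ₁(1) ) + (1/2)·( (ψ₀²(m+1) + ψ₁(m+1))·ψ₀(b+m+1) - (ψ₀²(1) + ψ₁(1))·ψ₀(b+1) ). -/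
open Finset

/-!
Only the recurrences `ψ₀ (k + 1) = ψ₀ k + 1 / k` and `ψ₁ (k + 1) = ψ₁ k - 1 / k ^ 2` enter:
the identity holds for any sequences `x`, `y`, `z` obeying the recurrences of `ψ₀ k`,
`ψ₀ (k + b)` and `ψ₁ k`, whatever their initial values, because both sides have the same
increment in `m`, which is a rational-function identity in `m` and `b`.
-/

lemma ψ₀_add_one {l : ℕ} (hl : 0 < l) : ψ₀ (l + 1) = ψ₀ l + 1 / (l : ℝ) := by
  obtain ⟨n, rfl⟩ := Nat.exists_eq_add_one_of_ne_zero hl.ne'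
  simp only [ψ₀, Nat.add_sub_cancel, sum_range_succ]
  push_cast
  ring

lemma ψ₁_add_one {l : ℕ} (hl : 0 < l) : ψ₁ (l + 1) = ψ₁ l - 1 / (l : ℝ) ^ 2 := by
  obtain ⟨n, rfl⟩ := Nat.exists_eq_add_one_of_ne_zero hl.ne'
  simp only [ψ₁, Nat.add_sub_cancel, sum_range_succ]
  push_cast
  ring

theorem sum_Icc_mul_div_eq_of_recurrence {x y z : ℕ → ℝ} {b : ℝ} (hb : 0 < b)
    (hx : ∀ k : ℕ, 0 < k → x (k + 1) = x k + 1 / k)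
    (hy : ∀ k : ℕ, 0 < k → y (k + 1) = y k + 1 / (k + b))
    (hz : ∀ k : ℕ, 0 < k → z (k + 1) = z k - 1 / k ^ 2) (m : ℕ) :
    ∑ k ∈ Icc 1 m, x k * y k / k =
      -(1 / 2) * ∑ k ∈ Icc 1 m, (z k / (k + b) + x k ^ 2 / (k + b)) -
        (1 / b) * ∑ k ∈ Icc 1 m, y k / k +
        (1 / b ^ 2) * (y (m + 1) - y 1 - x (m + 1) + x 1) +
        (1 / (2 * b)) * (2 * x (m + 1) * y (m + 1) - 2 * x 1 * y 1 - x (m + 1) ^ 2 -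
          z (m + 1) + x 1 ^ 2 + z 1) +
        (1 / 2) * ((x (m + 1) ^ 2 + z (m + 1)) * y (m + 1) - (x 1 ^ 2 + z 1) * y 1) := by
  induction m with
  | zero => simp only [Icc_eq_empty_of_lt zero_lt_one, sum_empty, zero_add]; ring
  | succ n ih =>
    have hn : 0 < n + 1 := n.succ_pos
    rw [sum_Icc_succ_top hn, sum_Icc_succ_top hn, sum_Icc_succ_top hn, ih,
      hx _ hn, hy _ hn, hz _ hn]
    have hb₀ : b ≠ 0 := hb.ne'
    have hnb : (n : ℝ) + 1 + b ≠ 0 := by positivity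
    push_cast
    field_simp
    ring

theorem stmt14_general (m b : ℕ) (hb : 0 < b) :
    ∑ k ∈ Finset.Icc 1 m, ψ₀ k * ψ₀ (k + b) / (k : ℝ) =
      -(1 / 2) * ∑ k ∈ Finset.Icc 1 m,
          (ψ₁ k / ((k : ℝ) + b) + ψ₀ k ^ 2 / ((k : ℝ) + b)) -
        (1 / (b : ℝ)) * ∑ k ∈ Finset.Icc 1 m, ψ₀ (k + b) / (k : ℝ) +
        (1 / (b : ℝ) ^ 2) *
          (ψ₀ (b + m + 1) - ψ₀ (b + 1) - ψ₀ (m + 1) + ψ₀ 1) +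
        (1 / (2 * (b : ℝ))) * (2 * ψ₀ (m + 1) * ψ₀ (b + m + 1) -
          2 * ψ₀ 1 * ψ₀ (b + 1) - ψ₀ (m + 1) ^ 2 - ψ₁ (m + 1) + ψ₀ 1 ^ 2 + ψ₁ 1) +
        (1 / 2) * ((ψ₀ (m + 1) ^ 2 + ψ₁ (m + 1)) * ψ₀ (b + m + 1) -
          (ψ₀ 1 ^ 2 + ψ₁ 1) * ψ₀ (b + 1)) := by
  have hy : ∀ k : ℕ, 0 < k → ψ₀ (k + 1 + b) = ψ₀ (k + b) + 1 / ((k : ℝ) + b) := by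
    intro k _
    rw [Nat.add_right_comm, ψ₀_add_one (by omega), Nat.cast_add]
  have := sum_Icc_mul_div_eq_of_recurrence (y := fun k ↦ ψ₀ (k + b)) (Nat.cast_pos.mpr hb)
    (fun _ ↦ ψ₀_add_one) hy (fun _ ↦ ψ₁_add_one) m
  rwa [Nat.add_right_comm m 1 b, Nat.add_comm m b, Nat.add_comm 1 b] at this

theorem stmt14 (m b : ℕ) (hm : 0 < m) (hb : 0 < b) :
    ∑ k ∈ Finset.Icc 1 m, ψ₀ k * ψ₀ (k + b) / (k : ℝ) =
      -(1 / 2) * ∑ k ∈ Finset.Icc 1 m,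
          (ψ₁ k / ((k : ℝ) + b) + ψ₀ k ^ 2 / ((k : ℝ) + b)) -
        (1 / (b : ℝ)) * ∑ k ∈ Finset.Icc 1 m, ψ₀ (k + b) / (k : ℝ) +
        (1 / (b : ℝ) ^ 2) *
          (ψ₀ (b + m + 1) - ψ₀ (b + 1) - ψ₀ (m + 1) + ψ₀ 1) +
        (1 / (2 * (b : ℝ))) * (2 * ψ₀ (m + 1) * ψ₀ (b + m + 1) -
          2 * ψ₀ 1 * ψ₀ (b + 1) - ψ₀ (m + 1) ^ 2 - ψ₁ (m + 1) + ψ₀ 1 ^ 2 + ψ₁ 1) +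
        (1 / 2) * ((ψ₀ (m + 1) ^ 2 + ψ₁ (m + 1)) * ψ₀ (b + m + 1) -
          (ψ₀ 1 ^ 2 + ψ₁ 1) * ψ₀ (b + 1)) :=
  stmt14_general m b hb
end
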